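/- arXiv:2005.13796 — 3 statements merged into one kernel-verified Lean document; each statement's English description precedes it below -/
import Mathlib

section
/- The minimum value of the ridge regression objective ‖F^T X + b 1^T - Y‖_F^2 + ρ‖F‖_F^2 over F and b equals ‖Y C‖_F^2 - trace((X C X^T + ρI)^{-1} X C Y^T Y C X^T); i.e., MRLSE = ‖YC‖_F^2 - DI. -/
/-!
The intercept and the weights decouple. Right multiplication by the centering matrix `C` is the
orthogonal projection of the rows onto the complement of `1`, and it kills every `b 1ᵀ`; so the
best intercept turns the residual `Fᵀ X - Y` into `(Fᵀ X - Y) C`, leaving a ridge regression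
without intercept for `A = X C`, `Z = Y C`. That one is solved by completing the square: with
`M = A Aᵀ + ρ I` (positive definite) and `S = M⁻¹ A Zᵀ`,
`‖Fᵀ A - Z‖² + ρ‖F‖² = ‖(F - S)ᵀ A‖² + ρ‖F - S‖² + ‖Z‖² - tr (M⁻¹ A Zᵀ Z Aᵀ)`.
Since `C` is symmetric and idempotent, `A Aᵀ = X C Xᵀ` and `A Zᵀ Z Aᵀ = X C Yᵀ Y C Xᵀ`.
-/

open Matrix

/-- Squared Frobenius norm. -/
def frobSq {m n : Type*} [Fintype m] [Fintype n] (M : Matrix m n ℝ) : ℝ :=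
  (M * Mᵀ).trace

open Set

lemma isLeast_range_uncurry {α β γ : Type*} [Preorder γ] {g : α → β → γ} {h : α → γ} {a : γ}
    (hg : ∀ x, IsLeast (range (g x)) (h x)) (hh : IsLeast (range h) a) :
    IsLeast (range fun q : α × β => g q.1 q.2) a := by
  obtain ⟨⟨x, rfl⟩, hx⟩ := hh
  obtain ⟨⟨y, hy⟩, -⟩ := hg x
  refine ⟨⟨(x, y), hy⟩, ?_⟩
  rintro _ ⟨⟨x', y'⟩, rfl⟩
  exact (hx ⟨x', rfl⟩).trans ((hg x').2 ⟨y', rfl⟩)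

section Frobenius

variable {m n : Type*} [Fintype m] [Fintype n]

lemma frobSq_nonneg (M : Matrix m n ℝ) : 0 ≤ frobSq M := by
  simp only [frobSq, trace, diag, mul_apply, transpose_apply]
  exact Finset.sum_nonneg fun i _ => Finset.sum_nonneg fun j _ => mul_self_nonneg _

lemma frobSq_eq_trace_transpose_mul (M : Matrix m n ℝ) : frobSq M = (Mᵀ * M).trace :=
  trace_mul_comm _ _

lemma frobSq_eq_add_of_isIdempotentElem [DecidableEq n] {P : Matrix n n ℝ} (hPt : Pᵀ = P)
    (hP : IsIdempotentElem P) (R : Matrix m n ℝ) :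
    frobSq R = frobSq (R * P) + frobSq (R * (1 - P)) := by
  have hPP : P * (P * Rᵀ) = P * Rᵀ := by rw [← Matrix.mul_assoc, hP.eq]
  have : R * P * (R * P)ᵀ + R * (1 - P) * (R * (1 - P))ᵀ = R * Rᵀ := by
    simp only [transpose_mul, transpose_sub, hPt, Matrix.mul_sub, Matrix.sub_mul, Matrix.mul_one,
      Matrix.mul_assoc, hPP]
    abel
  rw [frobSq, frobSq, frobSq, ← trace_add, this]

end Frobenius

section Centering

variable {m : Type*} (n : Type*) [Fintype n] [DecidableEq n]

noncomputable def centering : Matrix n n ℝ :=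
  1 - (Fintype.card n : ℝ)⁻¹ • vecMulVec (fun _ => 1) (fun _ => 1)

lemma centering_transpose : (centering n)ᵀ = centering n := by
  ext i j
  simp [centering, vecMulVec_apply, one_apply, eq_comm]

variable {n}

lemma mul_centering (R : Matrix m n ℝ) :
    R * centering n = R - vecMulVec ((Fintype.card n : ℝ)⁻¹ • R *ᵥ fun _ => 1) (fun _ => 1) := by
  ext i j
  simp [centering, mul_apply, vecMulVec_apply, mulVec, dotProduct, mul_sub, Finset.sum_sub_distrib,
    one_apply, ← Finset.sum_mul, mul_comm]

lemma vecMulVec_one_mul_centering (b : m → ℝ) :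
    vecMulVec b (fun _ : n => (1 : ℝ)) * centering n = 0 := by
  rcases isEmpty_or_nonempty n with hn | hn
  · exact Subsingleton.elim (α := Matrix m n ℝ) _ _
  rw [mul_centering]
  ext i j
  simp [vecMulVec_apply, mulVec, dotProduct, Fintype.card_ne_zero]

variable (n)

lemma isIdempotentElem_centering : IsIdempotentElem (centering n) := by
  rw [IsIdempotentElem]
  conv_lhs => enter [1]; rw [centering]
  rw [Matrix.sub_mul, Matrix.one_mul, Matrix.smul_mul, vecMulVec_one_mul_centering, smul_zero,
    sub_zero]

variable {n}

lemma isLeast_frobSq_add_vecMulVec_one [Fintype m] (R : Matrix m n ℝ) :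
    IsLeast (range fun b : m → ℝ => frobSq (R + vecMulVec b fun _ => 1))
      (frobSq (R * centering n)) := by
  refine ⟨⟨-((Fintype.card n : ℝ)⁻¹ • R *ᵥ fun _ => 1), ?_⟩, ?_⟩
  · simp only [mul_centering, neg_vecMulVec, sub_eq_add_neg]
  rintro _ ⟨b, rfl⟩
  dsimp only
  have hRb : (R + vecMulVec b fun _ => 1) * centering n = R * centering n := by
    rw [Matrix.add_mul, vecMulVec_one_mul_centering, add_zero]
  rw [frobSq_eq_add_of_isIdempotentElem (centering_transpose n) (isIdempotentElem_centering n)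
    (R + vecMulVec b _), hRb]
  exact le_add_of_nonneg_right (frobSq_nonneg _)

end Centering

section Ridge

variable {m n p : Type*} [Fintype m] [Fintype n] [Fintype p] [DecidableEq m]
  (A : Matrix m n ℝ) (Z : Matrix p n ℝ)

noncomputable def ridgeSolution (ρ : ℝ) : Matrix m p ℝ := (A * Aᵀ + ρ • 1)⁻¹ * (A * Zᵀ)

lemma posDef_mul_transpose_add_smul_one {ρ : ℝ} (hρ : 0 < ρ) : (A * Aᵀ + ρ • 1).PosDef := by
  simpa using PosDef.posSemidef_add (posSemidef_self_mul_conjTranspose A) (PosDef.one.smul hρ)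

lemma ridge_objective_eq {ρ : ℝ} (hρ : 0 < ρ) (F : Matrix m p ℝ) :
    frobSq (Fᵀ * A - Z) + ρ * frobSq F =
      frobSq ((F - ridgeSolution A Z ρ)ᵀ * A) + ρ * frobSq (F - ridgeSolution A Z ρ) +
        (frobSq Z - ((A * Aᵀ + ρ • 1)⁻¹ * (A * Zᵀ * Z * Aᵀ)).trace) := by
  set M := A * Aᵀ + ρ • 1 with hM
  set S := ridgeSolution A Z ρ with hS
  have hMt : Mᵀ = M := by simp [hM, transpose_mul]
  have hdet : IsUnit M.det := (posDef_mul_transpose_add_smul_one A hρ).det_pos.ne'.isUnit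
  have hMS : M * S = A * Zᵀ := by
    rw [hS, ridgeSolution, ← Matrix.mul_assoc, mul_nonsing_inv _ hdet, Matrix.one_mul]
  have hSt : Sᵀ = Z * Aᵀ * M⁻¹ := by
    rw [hS, ridgeSolution, transpose_mul, transpose_nonsing_inv, hMt, transpose_mul,
      transpose_transpose]
  have hAA : ∀ W : Matrix m p ℝ, A * (Aᵀ * W) = M * W - ρ • W := fun W => by
    rw [hM, Matrix.add_mul, Matrix.smul_mul, Matrix.one_mul, Matrix.mul_assoc, add_sub_cancel_right]
  have hZA : ∀ W : Matrix m p ℝ, Z * (Aᵀ * W) = Sᵀ * (M * W) := fun W => by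
    rw [hSt, Matrix.mul_assoc (Z * Aᵀ), nonsing_inv_mul_cancel_left _ _ hdet, Matrix.mul_assoc]
  have square : (Fᵀ * A - Z) * (Fᵀ * A - Z)ᵀ + ρ • (Fᵀ * F) =
      (F - S)ᵀ * A * ((F - S)ᵀ * A)ᵀ + ρ • ((F - S)ᵀ * (F - S)) + Z * Zᵀ - Sᵀ * (A * Zᵀ) := by
    simp only [transpose_mul, transpose_sub, transpose_transpose, Matrix.sub_mul, Matrix.mul_sub,
      Matrix.mul_assoc, hAA, hZA, ← hMS, Matrix.mul_smul, smul_sub]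
    abel
  have hconst : (Sᵀ * (A * Zᵀ)).trace = (M⁻¹ * (A * Zᵀ * Z * Aᵀ)).trace := by
    rw [hSt, Matrix.mul_assoc, trace_mul_comm]
    simp only [Matrix.mul_assoc]
  have h := congrArg trace square
  simp only [trace_add, trace_sub, trace_smul, smul_eq_mul] at h
  rw [frobSq_eq_trace_transpose_mul F, frobSq_eq_trace_transpose_mul (F - S), ← hconst]
  unfold frobSq
  linarith

lemma isLeast_ridge {ρ : ℝ} (hρ : 0 < ρ) :
    IsLeast (range fun F : Matrix m p ℝ => frobSq (Fᵀ * A - Z) + ρ * frobSq F)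
      (frobSq Z - ((A * Aᵀ + ρ • 1)⁻¹ * (A * Zᵀ * Z * Aᵀ)).trace) := by
  refine ⟨⟨ridgeSolution A Z ρ, ?_⟩, ?_⟩
  · dsimp only
    rw [ridge_objective_eq A Z hρ, sub_self]
    simp [frobSq]
  rintro _ ⟨F, rfl⟩
  dsimp only
  rw [ridge_objective_eq A Z hρ]
  have := frobSq_nonneg ((F - ridgeSolution A Z ρ)ᵀ * A)
  have := mul_nonneg hρ.le (frobSq_nonneg (F - ridgeSolution A Z ρ))
  linarith

end Ridge

/-- The minimum ridge least-square error equals `‖YC‖_F² − DI`. -/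
theorem mrlse_eq (d N c : ℕ)
    (X : Matrix (Fin d) (Fin N) ℝ) (Y : Matrix (Fin c) (Fin N) ℝ)
    (C : Matrix (Fin N) (Fin N) ℝ)
    (hC : C = (1 : Matrix (Fin N) (Fin N) ℝ) -
      (N : ℝ)⁻¹ • vecMulVec (fun _ => (1 : ℝ)) (fun _ => (1 : ℝ)))
    (ρ : ℝ) (hρ : 0 < ρ)
    (f : Matrix (Fin d) (Fin c) ℝ → (Fin c → ℝ) → ℝ)
    (hf : ∀ F b, f F b =
      frobSq (Fᵀ * X + vecMulVec b (fun _ => (1 : ℝ)) - Y) + ρ * frobSq F)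
    (DI : ℝ)
    (hDI : DI = ((X * C * Xᵀ + ρ • (1 : Matrix (Fin d) (Fin d) ℝ))⁻¹ *
      (X * C * Yᵀ * Y * C * Xᵀ)).trace) :
    IsLeast (Set.range fun p : Matrix (Fin d) (Fin c) ℝ × (Fin c → ℝ) => f p.1 p.2)
      (frobSq (Y * C) - DI) := by
  replace hC : C = centering (Fin N) := by rw [hC, centering, Fintype.card_fin]
  have hCC : ∀ {k : ℕ} (W : Matrix (Fin N) (Fin k) ℝ), C * (Cᵀ * W) = C * W := fun W => by
    rw [hC, centering_transpose, ← Matrix.mul_assoc, (isIdempotentElem_centering _).eq]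
  have h_intercept : ∀ F,
      IsLeast (range (f F)) (frobSq (Fᵀ * (X * C) - Y * C) + ρ * frobSq F) := by
    intro F
    have h := Monotone.map_isLeast (f := (· + ρ * frobSq F)) (fun _ _ h => add_le_add_left h _)
      (isLeast_frobSq_add_vecMulVec_one (Fᵀ * X - Y))
    simp only [← range_comp, Function.comp_def, ← add_sub_right_comm, ← hf, ← hC] at h
    rwa [Matrix.sub_mul, Matrix.mul_assoc] at h
  have h_ridge := isLeast_ridge (X * C) (Y * C) hρ
  simp only [transpose_mul, Matrix.mul_assoc, hCC] at h_ridge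
  simp only [Matrix.mul_assoc] at hDI
  exact hDI ▸ isLeast_range_uncurry h_intercept h_ridge
end

section
/- Non-decreasing property of DI (projection form): Let K̄ and K_B be the noise and signal matrices built from a feature matrix X. If the feature set T is a subset of S (i.e., X_T is obtained from X_S by deleting rows), then DI(T) ≤ DI(S), where DI(A) = trace((X_A C X_A^T + ρI)^{-1} X_A C Y^T Y C X_A^T) with ρ > 0. Equivalently: adding an extra feature row to X cannot decrease DI. -/
/-!
For a positive definite `A`, `tr(A⁻¹ B Bᵀ)` is the maximum over `W` of the concave quadratic
`2 tr(W B) - tr(W A Wᵀ)`, attained at `W = Bᵀ A⁻¹` (complete the square). With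
`A = X C Xᵀ + ρ I` and `B = X C Yᵀ` this maximum is DI. Restricting to the rows in the range
of `f` restricts the maximisation to those `W` whose columns vanish off that range, so it can
only decrease the maximum.
-/

open Matrix

namespace Matrix

section centeringMatrix

variable (ι : Type*) [Fintype ι] [DecidableEq ι]

noncomputable def centeringMatrix : Matrix ι ι ℝ :=
  1 - (Fintype.card ι : ℝ)⁻¹ • vecMulVec (fun _ => 1) (fun _ => 1)

variable {ι}

theorem centeringMatrix_transpose : (centeringMatrix ι)ᵀ = centeringMatrix ι := by
  rw [centeringMatrix, transpose_sub, transpose_one, transpose_smul, transpose_vecMulVec]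

theorem centeringMatrix_mul_self : centeringMatrix ι * centeringMatrix ι = centeringMatrix ι := by
  rw [centeringMatrix]
  set J : Matrix ι ι ℝ := vecMulVec (fun _ => 1) (fun _ => 1)
  set r : ℝ := (Fintype.card ι : ℝ)⁻¹
  have hJ : J * J = (Fintype.card ι : ℝ) • J := by
    ext
    simp [J, vecMulVec_mul_vecMulVec, vecMulVec_apply, dotProduct]
  -- also true for an empty `ι`, where `r = 0`
  have hr : r * r * Fintype.card ι = r := by simpa [r] using mul_self_mul_inv r
  rw [Matrix.sub_mul, Matrix.mul_sub, Matrix.mul_sub, Matrix.one_mul, Matrix.mul_one,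
    Matrix.one_mul, Matrix.smul_mul, Matrix.mul_smul, hJ, smul_smul, smul_smul, hr, sub_self,
    sub_zero]

theorem posSemidef_centeringMatrix : (centeringMatrix ι).PosSemidef := by
  have h : centeringMatrix ι = centeringMatrix ι * (centeringMatrix ι)ᴴ := by
    rw [conjTranspose_eq_transpose_of_trivial, centeringMatrix_transpose,
      centeringMatrix_mul_self]
  exact h ▸ posSemidef_self_mul_conjTranspose _

end centeringMatrix

variable {m n c : Type*} [Fintype m] [Fintype n] [Fintype c]

/-- With `A = M Mᵀ + ρ I` and `B = M Zᵀ` this is `‖Z‖² - (‖Z - W M‖² + ρ ‖W‖²)`, so maximising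
it over `W` is ridge regression of `Z` on the rows of `M`. -/
def ridgeGain (A : Matrix n n ℝ) (B : Matrix n c ℝ) (W : Matrix c n ℝ) : ℝ :=
  2 * (W * B).trace - (W * A * Wᵀ).trace

section ridgeGain

variable [DecidableEq n] {A : Matrix n n ℝ} (B : Matrix n c ℝ)

theorem ridgeGain_eq_sub (hAT : Aᵀ = A) (hA : IsUnit A.det) (W : Matrix c n ℝ) :
    ridgeGain A B W = (A⁻¹ * (B * Bᵀ)).trace
      - ((W - Bᵀ * A⁻¹) * A * (W - Bᵀ * A⁻¹)ᵀ).trace := by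
  have hW₀A : Bᵀ * A⁻¹ * A = Bᵀ := by rw [Matrix.mul_assoc, nonsing_inv_mul A hA, Matrix.mul_one]
  have hW₀T : (Bᵀ * A⁻¹)ᵀ = A⁻¹ * B := by
    rw [transpose_mul, transpose_nonsing_inv, hAT, transpose_transpose]
  have hAA : A * (A⁻¹ * B) = B := by rw [← Matrix.mul_assoc, mul_nonsing_inv A hA, Matrix.one_mul]
  have hBW : (Bᵀ * Wᵀ).trace = (W * B).trace := by rw [← transpose_mul, trace_transpose]
  have hBB : (Bᵀ * (A⁻¹ * B)).trace = (A⁻¹ * (B * Bᵀ)).trace := by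
    rw [trace_mul_comm, Matrix.mul_assoc]
  simp only [ridgeGain, Matrix.sub_mul, transpose_sub, Matrix.mul_sub, hW₀A, hW₀T,
    Matrix.mul_assoc W A, hAA, trace_sub, hBW, hBB]
  ring

theorem isGreatest_range_ridgeGain (hA : A.PosDef) :
    IsGreatest (Set.range (ridgeGain A B)) (A⁻¹ * (B * Bᵀ)).trace := by
  have hAT : Aᵀ = A := by simpa using hA.isHermitian.eq
  have hdet : IsUnit A.det := (isUnit_iff_isUnit_det A).1 hA.isUnit
  refine ⟨⟨Bᵀ * A⁻¹, by simp [ridgeGain_eq_sub B hAT hdet]⟩, ?_⟩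
  rintro _ ⟨W, rfl⟩
  rw [ridgeGain_eq_sub B hAT hdet, sub_le_self_iff]
  simpa using (hA.posSemidef.mul_mul_conjTranspose_same (W - Bᵀ * A⁻¹)).trace_nonneg

/-- `W * (1 : Matrix n n ℝ).submatrix f id` is `W` with zero columns inserted off the range
of `f`. -/
theorem ridgeGain_submatrix (f : m → n) (W : Matrix c m ℝ) :
    ridgeGain (A.submatrix f f) (B.submatrix f id) W
      = ridgeGain A B (W * (1 : Matrix n n ℝ).submatrix f id) := by
  set P : Matrix m n ℝ := (1 : Matrix n n ℝ).submatrix f id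
  have hPB : P * B = B.submatrix f id := one_submatrix_mul f (Equiv.refl n) B
  have hAP : A * Pᵀ = A.submatrix id f := by
    rw [transpose_submatrix, transpose_one]
    exact mul_submatrix_one (Equiv.refl n) f A
  have hPAP : P * A * Pᵀ = A.submatrix f f := by
    rw [Matrix.mul_assoc, hAP]
    exact one_submatrix_mul f (Equiv.refl n) _
  rw [ridgeGain, ridgeGain, transpose_mul, Matrix.mul_assoc W P B, hPB, ← hPAP]
  simp only [Matrix.mul_assoc]

theorem trace_inv_submatrix_mul_le [DecidableEq m] (hA : A.PosDef) {f : m → n}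
    (hf : Function.Injective f) :
    ((A.submatrix f f)⁻¹ * (B.submatrix f id * (B.submatrix f id)ᵀ)).trace
      ≤ (A⁻¹ * (B * Bᵀ)).trace := by
  obtain ⟨⟨W, hW⟩, -⟩ := isGreatest_range_ridgeGain (B.submatrix f id) (hA.submatrix hf)
  rw [← hW, ridgeGain_submatrix]
  exact (isGreatest_range_ridgeGain B hA).2 ⟨_, rfl⟩

end ridgeGain

end Matrix

/-- Non-decreasing property of DI: deleting rows of the feature matrix cannot
increase DI.  Here `X_T = X_S.submatrix f id` for an injective `f`. -/
theorem DI_nondecreasing (d k N c : ℕ)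
    (XS : Matrix (Fin d) (Fin N) ℝ) (Y : Matrix (Fin c) (Fin N) ℝ)
    (C : Matrix (Fin N) (Fin N) ℝ)
    (hC : C = (1 : Matrix (Fin N) (Fin N) ℝ) -
      (N : ℝ)⁻¹ • vecMulVec (fun _ => (1 : ℝ)) (fun _ => (1 : ℝ)))
    (ρ : ℝ) (hρ : 0 < ρ)
    (f : Fin k → Fin d) (hf : Function.Injective f)
    (XT : Matrix (Fin k) (Fin N) ℝ) (hXT : XT = XS.submatrix f id) :
    ((XT * C * XTᵀ + ρ • (1 : Matrix (Fin k) (Fin k) ℝ))⁻¹ *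
        (XT * C * Yᵀ * Y * C * XTᵀ)).trace ≤
      ((XS * C * XSᵀ + ρ • (1 : Matrix (Fin d) (Fin d) ℝ))⁻¹ *
        (XS * C * Yᵀ * Y * C * XSᵀ)).trace := by
  replace hC : C = centeringMatrix (Fin N) := by rw [hC, centeringMatrix, Fintype.card_fin]
  have hCT : Cᵀ = C := hC ▸ centeringMatrix_transpose
  have hgram : ∀ {n : ℕ} (X : Matrix (Fin n) (Fin N) ℝ),
      X * C * Yᵀ * Y * C * Xᵀ = X * C * Yᵀ * (X * C * Yᵀ)ᵀ := by
    intro n X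
    simp only [transpose_mul, transpose_transpose, hCT, Matrix.mul_assoc]
  have hA : (XS * C * XSᵀ + ρ • 1).PosDef := by
    refine PosDef.posSemidef_add ?_ (PosDef.one.smul hρ)
    simpa using (hC ▸ posSemidef_centeringMatrix).mul_mul_conjTranspose_same XS
  have hAT : XT * C * XTᵀ + ρ • 1 = (XS * C * XSᵀ + ρ • 1).submatrix f f := by
    rw [← submatrix_one f hf, hXT]
    rfl
  have hBT : XT * C * Yᵀ = (XS * C * Yᵀ).submatrix f id := hXT ▸ rfl
  rw [hgram, hgram, hAT, hBT]
  exact trace_inv_submatrix_mul_le _ hA hf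
end

section
/- Generalized Rayleigh quotient maximizer: for symmetric positive definite A (= K̄ + ρI) and K_B = M M^T with M = X C Y^T, the function F ↦ trace((F^T A F)^{-1} F^T K_B F) over d×c matrices F of full column rank attains the value trace(A^{-1} K_B) at F* = A^{-1} M (assuming F*^T A F* is invertible), and trace(A^{-1} K_B) is an upper bound: trace((F^T A F)^{-1} F^T K_B F) ≤ trace(A^{-1} K_B) for all full-column-rank F. -/
/-!
Put `P = F (Fᴴ A F)⁻¹ Fᴴ`. Then `P A P = P`, so `Q = A⁻¹ - P` satisfies `Q A Q = Q`, and with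
`X = Q M` the positive semidefinite matrix `Xᴴ A X` equals `Mᴴ A⁻¹ M - Mᴴ P M`. Its trace is
nonnegative, which after cycling traces is the upper bound. At `F = A⁻¹ M` both `Fᴴ A F` and
`Fᴴ M` equal `T = Mᴴ A⁻¹ M`, so the quotient is `tr (T⁻¹ T T) = tr T`.
-/

open Matrix

open scoped ComplexOrder

namespace Matrix

variable {n m k : Type*} [Fintype n] [Fintype m]

section CommRing

variable {R : Type*} [CommRing R] [StarRing R]

theorem trace_conjTranspose_mul_mul (B : Matrix n n R) (M : Matrix n m R) :
    (Mᴴ * B * M).trace = (B * (M * Mᴴ)).trace := by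
  rw [trace_mul_comm, ← Matrix.mul_assoc, trace_mul_comm]

theorem mul_inv_conjTranspose_mul_mul_self [DecidableEq m] {A : Matrix n n R} (F : Matrix n m R)
    (hF : IsUnit (Fᴴ * A * F).det) :
    F * (Fᴴ * A * F)⁻¹ * Fᴴ * A * (F * (Fᴴ * A * F)⁻¹ * Fᴴ) = F * (Fᴴ * A * F)⁻¹ * Fᴴ :=
  calc _ = F * (Fᴴ * A * F)⁻¹ * (Fᴴ * A * F) * (Fᴴ * A * F)⁻¹ * Fᴴ := by
        simp only [Matrix.mul_assoc]
    _ = _ := by rw [nonsing_inv_mul_cancel_right _ _ hF]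

end CommRing

variable {𝕜 : Type*} [RCLike 𝕜] [DecidableEq n] [DecidableEq m]

noncomputable def rayleighQuotient (A K : Matrix n n 𝕜) (F : Matrix n m 𝕜) : 𝕜 :=
  ((Fᴴ * A * F)⁻¹ * (Fᴴ * K * F)).trace

theorem trace_conjTranspose_mul_mul_inv_le [Fintype k] {A : Matrix n n 𝕜} (hA : A.PosDef)
    (F : Matrix n m 𝕜) (hF : IsUnit (Fᴴ * A * F).det) (M : Matrix n k 𝕜) :
    (Mᴴ * F * (Fᴴ * A * F)⁻¹ * Fᴴ * M).trace ≤ (Mᴴ * A⁻¹ * M).trace := by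
  have hAdet : IsUnit A.det := (isUnit_iff_isUnit_det A).1 hA.isUnit
  set P := F * (Fᴴ * A * F)⁻¹ * Fᴴ with hP
  have hPP : P * A * P = P := mul_inv_conjTranspose_mul_mul_self F hF
  have hPH : Pᴴ = P := by
    simp only [hP, conjTranspose_mul, conjTranspose_conjTranspose, conjTranspose_nonsing_inv,
      hA.isHermitian.eq, Matrix.mul_assoc]
  have hQ : (A⁻¹ - P) * A * (A⁻¹ - P) = A⁻¹ - P := by
    simp only [sub_mul, mul_sub, nonsing_inv_mul _ hAdet, mul_nonsing_inv_cancel_right _ _ hAdet,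
      hPP, one_mul]
    abel
  have hQH : (A⁻¹ - P)ᴴ = A⁻¹ - P := by
    rw [conjTranspose_sub, hPH, conjTranspose_nonsing_inv, hA.isHermitian.eq]
  have hX : ((A⁻¹ - P) * M)ᴴ * A * ((A⁻¹ - P) * M) = Mᴴ * A⁻¹ * M - Mᴴ * P * M :=
    calc _ = Mᴴ * ((A⁻¹ - P) * A * (A⁻¹ - P)) * M := by
          rw [conjTranspose_mul, hQH]; simp only [Matrix.mul_assoc]
      _ = _ := by rw [hQ, Matrix.mul_sub, Matrix.sub_mul]
  have hnonneg := (hA.posSemidef.conjTranspose_mul_mul_same ((A⁻¹ - P) * M)).trace_nonneg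
  rw [hX, trace_sub, sub_nonneg] at hnonneg
  simpa only [hP, Matrix.mul_assoc] using hnonneg

theorem rayleighQuotient_le [Fintype k] {A : Matrix n n 𝕜} (hA : A.PosDef) (M : Matrix n k 𝕜)
    (F : Matrix n m 𝕜) (hF : IsUnit (Fᴴ * A * F).det) :
    rayleighQuotient A (M * Mᴴ) F ≤ (A⁻¹ * (M * Mᴴ)).trace :=
  calc rayleighQuotient A (M * Mᴴ) F = ((Fᴴ * A * F)⁻¹ * (Fᴴ * M) * (Mᴴ * F)).trace := by
        simp only [rayleighQuotient, Matrix.mul_assoc]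
    _ = (Mᴴ * F * (Fᴴ * A * F)⁻¹ * Fᴴ * M).trace := by
        rw [trace_mul_comm]; simp only [Matrix.mul_assoc]
    _ ≤ (Mᴴ * A⁻¹ * M).trace := trace_conjTranspose_mul_mul_inv_le hA F hF M
    _ = (A⁻¹ * (M * Mᴴ)).trace := trace_conjTranspose_mul_mul _ M

theorem conjTranspose_inv_mul_mul_inv_mul {A : Matrix n n 𝕜} (hA : A.PosDef) (M : Matrix n k 𝕜) :
    (A⁻¹ * M)ᴴ * A * (A⁻¹ * M) = Mᴴ * A⁻¹ * M := by
  rw [conjTranspose_mul, conjTranspose_nonsing_inv, hA.isHermitian.eq, Matrix.mul_assoc,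
    mul_nonsing_inv_cancel_left _ _ ((isUnit_iff_isUnit_det A).1 hA.isUnit), Matrix.mul_assoc]

theorem rayleighQuotient_inv_mul {A : Matrix n n 𝕜} (hA : A.PosDef) (M : Matrix n m 𝕜)
    (hM : IsUnit ((A⁻¹ * M)ᴴ * A * (A⁻¹ * M)).det) :
    rayleighQuotient A (M * Mᴴ) (A⁻¹ * M) = (A⁻¹ * (M * Mᴴ)).trace := by
  rw [conjTranspose_inv_mul_mul_inv_mul hA] at hM
  have hK : (A⁻¹ * M)ᴴ * (M * Mᴴ) * (A⁻¹ * M) = (Mᴴ * A⁻¹ * M) * (Mᴴ * A⁻¹ * M) := by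
    rw [conjTranspose_mul, conjTranspose_nonsing_inv, hA.isHermitian.eq]
    simp only [Matrix.mul_assoc]
  rw [rayleighQuotient, conjTranspose_inv_mul_mul_inv_mul hA, hK,
    nonsing_inv_mul_cancel_left _ _ hM, trace_conjTranspose_mul_mul]

end Matrix

/-- Generalized Rayleigh quotient maximizer: for symmetric positive definite `A`
and `K_B = M Mᵀ`, the quotient `trace((Fᵀ A F)⁻¹ Fᵀ K_B F)` attains the value
`trace(A⁻¹ K_B)` at `F* = A⁻¹ M`, and this is an upper bound over all `F` with
`Fᵀ A F` invertible. -/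
theorem rayleigh_quotient_maximizer (d c : ℕ)
    (A : Matrix (Fin d) (Fin d) ℝ) (hA : A.PosDef)
    (M : Matrix (Fin d) (Fin c) ℝ)
    (KB : Matrix (Fin d) (Fin d) ℝ) (hKB : KB = M * Mᵀ)
    (Fstar : Matrix (Fin d) (Fin c) ℝ) (hFstar : Fstar = A⁻¹ * M) :
    (IsUnit (Fstarᵀ * A * Fstar).det →
      ((Fstarᵀ * A * Fstar)⁻¹ * (Fstarᵀ * KB * Fstar)).trace = (A⁻¹ * KB).trace) ∧
    (∀ F : Matrix (Fin d) (Fin c) ℝ, IsUnit (Fᵀ * A * F).det →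
      ((Fᵀ * A * F)⁻¹ * (Fᵀ * KB * F)).trace ≤ (A⁻¹ * KB).trace) := by
  subst hKB hFstar
  simp only [← conjTranspose_eq_transpose_of_trivial]
  exact ⟨rayleighQuotient_inv_mul hA M, rayleighQuotient_le hA M⟩
end
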